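/- Let ν be a Borel measure on ℝ^d with c₀ 2^{−mn} ≤ ν(D_m^a) < ∞ for all a ∈ ℝⁿ and m ∈ ℤ, for some constant c₀ > 0. Then for all x, y, z, z₁, z₂ ∈ ℝ^d and m ∈ ℤ: 0 ≤ Λ_m^ν(x,z;y) ≤ C 2^{mn}, and |Λ_m^ν(x,z₁;y) − Λ_m^ν(x,z₂;y)| ≤ C 2^{m(n+1)} |z₁ − z₂|, where C depends only on n and c₀. -/

import Mathlib

open MeasureTheory Set Filter ENNReal NNReal

noncomputable section

/-- Euclidean space `ℝ^k`. -/
abbrev Euc (k : ℕ) : Type := EuclideanSpace ℝ (Fin k)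

/-- Projection `x ↦ x̃` onto the first `n` coordinates. -/
def projn (n d : ℕ) (h : n ≤ d) (x : Euc d) : Euc n := WithLp.toLp 2 (fun i : Fin n => x (Fin.castLE h i))

/-- An odd Calderón–Zygmund kernel of homogeneity `-n` on `ℝ^d`, with constant `CK`. -/
structure IsCZKernel (n d : ℕ) (CK : ℝ) (K : Euc d → ℝ) : Prop where
  pos : 0 < CK
  odd : ∀ x : Euc d, K (-x) = -K x
  diff : ∀ x : Euc d, x ≠ 0 → DifferentiableAt ℝ K x
  diff2 : ∀ x : Euc d, x ≠ 0 → DifferentiableAt ℝ (fderiv ℝ K) x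
  bound : ∀ x : Euc d, x ≠ 0 → |K x| ≤ CK / ‖x‖ ^ n
  fderiv_bound : ∀ x : Euc d, x ≠ 0 → ‖fderiv ℝ K x‖ ≤ CK / ‖x‖ ^ (n + 1)
  fderiv2_bound : ∀ x : Euc d, x ≠ 0 → ‖fderiv ℝ (fderiv ℝ K) x‖ ≤ CK / ‖x‖ ^ (n + 2)

/-- The smooth truncation profile `φ_ℝ`: a nondecreasing `C²` function with
`χ_{[3√n,∞)} ≤ φ_ℝ ≤ χ_{[2.1√n,∞)}` (extended by `0` to all of `ℝ`). -/
structure IsCutoff (n : ℕ) (φR : ℝ → ℝ) : Prop where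
  mono : Monotone φR
  smooth : ContDiff ℝ 2 φR
  nonneg : ∀ t : ℝ, 0 ≤ φR t
  le_one : ∀ t : ℝ, φR t ≤ 1
  eq_zero : ∀ t : ℝ, t < 2.1 * Real.sqrt n → φR t = 0
  eq_one : ∀ t : ℝ, 3 * Real.sqrt n ≤ t → φR t = 1

/-- `φ_ε(x) = φ_ℝ(|x̃|/ε)`. -/
def phiE (n d : ℕ) (h : n ≤ d) (φR : ℝ → ℝ) (ε : ℝ) (x : Euc d) : ℝ :=
  φR (‖projn n d h x‖ / ε)

/-- The map `u ↦ (u, A u)` from `ℝⁿ` to `ℝ^d`. -/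
def graphMap (n d : ℕ) (h : n ≤ d) (A : Euc n → Euc (d - n)) (u : Euc n) : Euc d :=
  WithLp.toLp 2 (fun i : Fin d => if hi : (i : ℕ) < n then u ⟨i, hi⟩
           else A u ⟨(i : ℕ) - n, by have := i.isLt; omega⟩)

/-- The graph `Γ` of `A`. -/
def graphSet (n d : ℕ) (h : n ≤ d) (A : Euc n → Euc (d - n)) : Set (Euc d) :=
  Set.range (graphMap n d h A)

/-- `H^n` restricted to the graph of `A`. -/
def graphMeasure (n d : ℕ) (h : n ≤ d) (A : Euc n → Euc (d - n)) : Measure (Euc d) :=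
  (μH[(n : ℝ)]).restrict (graphSet n d h A)

/-- The measure `f · H^n_Γ`. -/
def lipGraphMeasure (n d : ℕ) (h : n ≤ d) (A : Euc n → Euc (d - n)) (f : Euc d → ℝ) :
    Measure (Euc d) :=
  (graphMeasure n d h A).withDensity fun y => ENNReal.ofReal (f y)

/-- The smoothly truncated singular integral `T^ν_{φ_ε} f(x) = ∫ φ_ε(x-y) K(x-y) f(y) dν(y)`. -/
def Tphi (n d : ℕ) (h : n ≤ d) (φR : ℝ → ℝ) (K : Euc d → ℝ) (ν : Measure (Euc d))
    (f : Euc d → ℝ) (ε : ℝ) (x : Euc d) : ℝ :=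
  ∫ y, phiE n d h φR ε (x - y) * K (x - y) * f y ∂ν

/-- The `ρ`-variation of a family `G = {G ε}_{ε > 0}`. -/
def varRho (ρ : ℝ) (G : ℝ → ℝ) : ℝ≥0∞ :=
  ⨆ (ε : ℤ → ℝ) (_ : Antitone ε) (_ : ∀ m : ℤ, 0 < ε m),
    (∑' m : ℤ, (ENNReal.ofReal |G (ε (m + 1)) - G (ε m)|) ^ ρ) ^ (1 / ρ)

/-- The oscillation of a family `G = {G ε}_{ε > 0}` with respect to a fixed
sequence `r`. -/
def oscO (r : ℤ → ℝ) (G : ℝ → ℝ) : ℝ≥0∞ :=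
  ⨆ (ε : ℤ → ℝ) (δ : ℤ → ℝ)
    (_ : ∀ m : ℤ, r (m + 1) ≤ ε m ∧ ε m ≤ δ m ∧ δ m ≤ r m),
    (∑' m : ℤ, (ENNReal.ofReal |G (ε m) - G (δ m)|) ^ (2 : ℝ)) ^ (1 / 2 : ℝ)

/-- The `λ`-jump counting function of a family `G = {G ε}_{ε > 0}`. -/
def jumpN (lam : ℝ) (G : ℝ → ℝ) : ℝ≥0∞ :=
  ⨆ (N : ℕ) (_ : ∃ ε δ : ℕ → ℝ,
      (∀ i, i < N → 0 < ε i) ∧ (∀ i, i < N → ε i < δ i) ∧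
      (∀ i, i + 1 < N → δ i ≤ ε (i + 1)) ∧
      (∀ i, i < N → lam < |G (ε i) - G (δ i)|)), (N : ℝ≥0∞)

/-- The `ρ`-variation of a `ℤ`-indexed family. -/
def varRhoZ (ρ : ℝ) (G : ℤ → ℝ) : ℝ≥0∞ :=
  ⨆ (mk : ℤ → ℤ) (_ : Antitone mk),
    (∑' k : ℤ, (ENNReal.ofReal |G (mk (k + 1)) - G (mk k)|) ^ ρ) ^ (1 / ρ)

/-- The oscillation of a `ℤ`-indexed family with respect to a fixed integer sequence `r`. -/
def oscZ (r : ℤ → ℤ) (G : ℤ → ℝ) : ℝ≥0∞ :=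
  ⨆ (ε : ℤ → ℤ) (δ : ℤ → ℤ)
    (_ : ∀ m : ℤ, r (m + 1) ≤ ε m ∧ ε m ≤ δ m ∧ δ m ≤ r m),
    (∑' m : ℤ, (ENNReal.ofReal |G (ε m) - G (δ m)|) ^ (2 : ℝ)) ^ (1 / 2 : ℝ)

/-- A cube `a + [0,b)^n ⊆ ℝⁿ`. -/
def cubeSet (n : ℕ) (a : Euc n) (b : ℝ) : Set (Euc n) :=
  {u | ∀ i : Fin n, a i ≤ u i ∧ u i < a i + b}

/-- A "vertical" cube `D = D̃ × ℝ^{d-n}`, `D̃` a cube of `ℝⁿ`. -/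
def IsVCube (n d : ℕ) (h : n ≤ d) (D : Set (Euc d)) : Prop :=
  ∃ (a : Euc n) (b : ℝ), 0 < b ∧ D = {x : Euc d | projn n d h x ∈ cubeSet n a b}

/-- The half-open v-cube with center `z` (in `ℝⁿ`) and side length `ℓ`. -/
def vQ (n d : ℕ) (h : n ≤ d) (z : Euc n) (ℓ : ℝ) : Set (Euc d) :=
  {x : Euc d | ∀ i : Fin n,
    z i - ℓ / 2 ≤ projn n d h x i ∧ projn n d h x i < z i + ℓ / 2}

/-- The cylinder `B(z̃_Q, C_Γ ℓ(Q)) × ℝ^{d-n}` associated with the v-cube of center `z`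
and side length `ℓ`. -/
def BQ (n d : ℕ) (h : n ≤ d) (CΓ : ℝ) (z : Euc n) (ℓ : ℝ) : Set (Euc d) :=
  {x : Euc d | dist (projn n d h x) z ≤ CΓ * ℓ}

/-- The grid cube `D_m^a = (a + [0, 2^{-m})^n) × ℝ^{d-n}`. -/
def Dgrid (n d : ℕ) (h : n ≤ d) (a : Euc n) (m : ℤ) : Set (Euc d) :=
  {x : Euc d | projn n d h x ∈ cubeSet n a ((2 : ℝ) ^ (-m))}

/-- The center of the dyadic cube `2^{-m}(k + [0,1)^n)`. -/
def dyadicCenter (n : ℕ) (m : ℤ) (k : Fin n → ℤ) : Euc n :=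
  WithLp.toLp 2 (fun i : Fin n => ((k i : ℝ) + 1 / 2) * (2 : ℝ) ^ (-m))

/-- `∫_{D^c} K(z-y) dν(y)`, understood as `lim_{M→∞} ∫_{D^c ∩ {|z-y|<M}} K(z-y) dν(y)`. -/
def Ktail (d : ℕ) (K : Euc d → ℝ) (ν : Measure (Euc d)) (D : Set (Euc d)) (z : Euc d) : ℝ :=
  limUnder atTop fun M : ℝ => ∫ y in Dᶜ ∩ Metric.ball z M, K (z - y) ∂ν

/-- `E_D ν = ν(D)⁻¹ ∫_D ∫_{D^c} K(z-y) dν(y) dν(z)`. -/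
def cubeAvg (d : ℕ) (K : Euc d → ℝ) (ν : Measure (Euc d)) (D : Set (Euc d)) : ℝ :=
  ((ν D).toReal)⁻¹ * ∫ z in D, Ktail d K ν D z ∂ν

/-- The averaged martingale `E_m ν(x) = 2^{mn} ∫_{{a : x ∈ D_m^a}} E_{D_m^a} ν da`. -/
def Em (n d : ℕ) (h : n ≤ d) (K : Euc d → ℝ) (ν : Measure (Euc d)) (m : ℤ) (x : Euc d) : ℝ :=
  (2 : ℝ) ^ (m * (n : ℤ)) *
    ∫ a in {a : Euc n | x ∈ Dgrid n d h a m},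
      cubeAvg d K ν (Dgrid n d h a m) ∂(volume : Measure (Euc n))

/-- `Λ_m^ν(x,z;y) = 2^{mn} ∫_{{a : x,z ∈ D_m^a, y ∉ D_m^a}} ν(D_m^a)⁻¹ da`. -/
def LambdaM (n d : ℕ) (h : n ≤ d) (ν : Measure (Euc d)) (m : ℤ) (x z y : Euc d) : ℝ :=
  (2 : ℝ) ^ (m * (n : ℤ)) *
    ∫ a in {a : Euc n |
        x ∈ Dgrid n d h a m ∧ z ∈ Dgrid n d h a m ∧ y ∉ Dgrid n d h a m},
      ((ν (Dgrid n d h a m)).toReal)⁻¹ ∂(volume : Measure (Euc n))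

/-- The doubly truncated maximal singular integral
`T_*ν(x) = sup_{0<ε<M} |∫_{ε<|x-y|<M} K(x-y) dν(y)|`. -/
def Tstar (d : ℕ) (K : Euc d → ℝ) (ν : Measure (Euc d)) (x : Euc d) : ℝ≥0∞ :=
  ⨆ (ε : ℝ) (M : ℝ) (_ : 0 < ε) (_ : ε < M),
    ENNReal.ofReal |∫ y in {y : Euc d | ε < dist x y ∧ dist x y < M}, K (x - y) ∂ν|

/-- `(Kφ_ε ∗ ν)(x)`, understood as `lim_{M→∞} ∫_{|x-y|<M} φ_ε(x-y) K(x-y) dν(y)`. -/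
def KphiM (n d : ℕ) (h : n ≤ d) (φR : ℝ → ℝ) (K : Euc d → ℝ) (ν : Measure (Euc d))
    (ε : ℝ) (x : Euc d) : ℝ :=
  limUnder atTop fun M : ℝ =>
    ∫ y in Metric.ball x M, phiE n d h φR ε (x - y) * K (x - y) ∂ν

/-- An (affine) `n`-plane in `ℝ^d`. -/
def IsNPlane (n d : ℕ) (L : Set (Euc d)) : Prop :=
  ∃ (p : Euc d) (φ : Euc n →ₗᵢ[ℝ] Euc d), L = Set.range fun u => p + φ u

/-- The localized Wasserstein-type distance
`dist_F(σ,ν) = sup {|∫ g dσ - ∫ g dν| : Lip(g) ≤ 1, supp g ⊆ F}`. -/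
def wdist (d : ℕ) (F : Set (Euc d)) (σ ν : Measure (Euc d)) : ℝ≥0∞ :=
  ⨆ (g : Euc d → ℝ) (_ : LipschitzWith 1 g) (_ : Function.support g ⊆ F),
    ENNReal.ofReal |(∫ y, g y ∂σ) - ∫ y, g y ∂ν|

/-- The (topological) support of a measure. -/
def msupport (d : ℕ) (μ : Measure (Euc d)) : Set (Euc d) :=
  {x : Euc d | ∀ U : Set (Euc d), IsOpen U → x ∈ U → 0 < μ U}

open Classical in
/-- The coefficient `α_μ(Q)` of the v-cube `Q` with center `z` and side length `ℓ`. -/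
def alphaC (n d : ℕ) (h : n ≤ d) (CΓ : ℝ) (μ : Measure (Euc d)) (z : Euc n) (ℓ : ℝ) :
    ℝ≥0∞ :=
  if vQ n d h z ℓ ∩ msupport d μ = ∅ then 0
  else (ENNReal.ofReal (ℓ ^ (n + 1)))⁻¹ *
    ⨅ (c : ℝ≥0) (L : Set (Euc d)) (_ : IsNPlane n d L),
      wdist d (BQ n d h CΓ z ℓ) μ ((c : ℝ≥0∞) • (μH[(n : ℝ)]).restrict L)

/-- The coefficient `β_{2,μ}(Q)` of the v-cube `Q` with center `z` and side length `ℓ`. -/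
def beta2 (n d : ℕ) (h : n ≤ d) (CΓ : ℝ) (μ : Measure (Euc d)) (z : Euc n) (ℓ : ℝ) :
    ℝ≥0∞ :=
  ⨅ (L : Set (Euc d)) (_ : IsNPlane n d L),
    ((ENNReal.ofReal (ℓ ^ n))⁻¹ *
      ∫⁻ y in vQ n d h z (CΓ * ℓ),
        ENNReal.ofReal ((Metric.infDist y L / ℓ) ^ 2) ∂μ) ^ (1 / 2 : ℝ)

/-- The average `m_Q(g) = μ(Q)⁻¹ ∫_Q g dμ`. -/
def mAvg (d : ℕ) (μ : Measure (Euc d)) (Q : Set (Euc d)) (g : Euc d → ℝ) : ℝ :=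
  ((μ Q).toReal)⁻¹ * ∫ y in Q, g y ∂μ

/-- The Hardy–Littlewood maximal operator over v-cubes. -/
def maxHL (n d : ℕ) (h : n ≤ d) (μ : Measure (Euc d)) (g : Euc d → ℝ) (x : Euc d) : ℝ≥0∞ :=
  ⨆ (Q : Set (Euc d)) (_ : IsVCube n d h Q) (_ : x ∈ Q),
    ENNReal.ofReal (mAvg d μ Q fun y => |g y|)

/-- The sharp maximal operator over v-cubes. -/
def maxSharp (n d : ℕ) (h : n ≤ d) (μ : Measure (Euc d)) (g : Euc d → ℝ) (x : Euc d) :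
    ℝ≥0∞ :=
  ⨆ (Q : Set (Euc d)) (_ : IsVCube n d h Q) (_ : x ∈ Q),
    ENNReal.ofReal (mAvg d μ Q fun y => |g y - mAvg d μ Q g|)

/-- The centered Hardy–Littlewood maximal operator `M^ν`. -/
def maxB (d : ℕ) (ν : Measure (Euc d)) (f : Euc d → ℝ) (x : Euc d) : ℝ≥0∞ :=
  ⨆ (r : ℝ) (_ : 0 < r),
    (ν (Metric.ball x r))⁻¹ * ∫⁻ y in Metric.ball x r, ENNReal.ofReal |f y| ∂ν

/-!
Put `g a = ν(D_m^a)⁻¹`. The corners `a` with `w ∈ D_m^a` form the box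
`∏ᵢ (w̃ᵢ - 2^{-m}, w̃ᵢ]` of volume `2^{-mn}`, and `Λ_m^ν(x,z;y)` is `2^{mn}` times the integral
of `g` over a subset of the box of `x`. The lower bound on `ν` gives `0 ≤ g ≤ c₀⁻¹ 2^{mn}`,
whence `Λ_m^ν ≤ c₀⁻¹ 2^{mn}`. Replacing `z₁` by `z₂` changes the domain of integration only
inside the symmetric difference of the boxes of `z₁` and `z₂`, which is covered by `2n` slabs of
volume at most `|z₁ - z₂| 2^{-m(n-1)}`; this gives the Lipschitz bound with constant
`2n c₀⁻¹ 2^{m(n+1)}`. Since unit grid cubes have finite mass, `ν` is σ-finite, which makes `g`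
measurable.
-/

section Boxes

open Function

variable {ι : Type*} [Fintype ι]

lemma volume_Ioc_sub_diff_Ioc_sub_le (b c ε : ℝ) :
    volume (Ioc (b - ε) b \ Ioc (c - ε) c) ≤ ENNReal.ofReal (dist b c) := by
  have hcover : Ioc (b - ε) b \ Ioc (c - ε) c ⊆ Ioc (b - ε) (c - ε) ∪ Ioc c b := by
    rintro t ⟨⟨hbt, htb⟩, htc⟩
    rw [mem_Ioc, not_and_or, not_lt, not_le] at htc
    rcases htc with htc | htc
    · exact Or.inl ⟨hbt, htc⟩
    · exact Or.inr ⟨htc, htb⟩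
  calc volume (Ioc (b - ε) b \ Ioc (c - ε) c)
      ≤ volume (Ioc (b - ε) (c - ε)) + volume (Ioc c b) :=
        (measure_mono hcover).trans (measure_union_le _ _)
    _ = ENNReal.ofReal (dist b c) := by
        rw [Real.volume_Ioc, Real.volume_Ioc, sub_sub_sub_cancel_right, Real.dist_eq]
        rcases le_total b c with hbc | hcb
        · rw [ENNReal.ofReal_of_nonpos (sub_nonpos.2 hbc), add_zero, abs_sub_comm,
            abs_of_nonneg (sub_nonneg.2 hbc)]
        · rw [ENNReal.ofReal_of_nonpos (sub_nonpos.2 hcb), zero_add,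
            abs_of_nonneg (sub_nonneg.2 hcb)]

lemma volume_pi_Ioc_sub (c : ι → ℝ) {ε : ℝ} (hε : 0 ≤ ε) :
    volume (univ.pi fun i => Ioc (c i - ε) (c i)) = ENNReal.ofReal (ε ^ Fintype.card ι) := by
  simp [volume_pi_pi, Real.volume_Ioc, ENNReal.ofReal_pow hε]

lemma volume_pi_Ioc_sub_diff_le (c₁ c₂ : ι → ℝ) {ε : ℝ} (hε : 0 ≤ ε) :
    volume ((univ.pi fun i => Ioc (c₁ i - ε) (c₁ i)) \ univ.pi fun i => Ioc (c₂ i - ε) (c₂ i)) ≤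
      Fintype.card ι * ENNReal.ofReal (dist c₁ c₂ * ε ^ (Fintype.card ι - 1)) := by
  classical
  set I : ι → Set ℝ := fun i => Ioc (c₁ i - ε) (c₁ i)
  set slab : ι → Set (ι → ℝ) := fun i => univ.pi (update I i (I i \ Ioc (c₂ i - ε) (c₂ i)))
  have hcover : (univ.pi I \ univ.pi fun i => Ioc (c₂ i - ε) (c₂ i)) ⊆ ⋃ i, slab i := by
    rintro a ⟨ha₁, ha₂⟩
    obtain ⟨i, -, hi⟩ := not_forall₂.1 ha₂
    refine mem_iUnion.2 ⟨i, fun j _ => ?_⟩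
    rcases eq_or_ne j i with rfl | hj
    · rw [update_self]
      exact ⟨ha₁ j trivial, hi⟩
    · rw [update_of_ne hj]
      exact ha₁ j trivial
  have hslab : ∀ i, volume (slab i) ≤ ENNReal.ofReal (dist c₁ c₂ * ε ^ (Fintype.card ι - 1)) := by
    intro i
    have hI : ∀ j, volume (I j) = ENNReal.ofReal ε := fun j => by
      simp [I, Real.volume_Ioc]
    have hi : volume (I i \ Ioc (c₂ i - ε) (c₂ i)) ≤ ENNReal.ofReal (dist c₁ c₂) :=
      (volume_Ioc_sub_diff_Ioc_sub_le _ _ _).trans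
        (ENNReal.ofReal_le_ofReal (dist_le_pi_dist c₁ c₂ i))
    rw [volume_pi_pi, ← Finset.mul_prod_erase _ _ (Finset.mem_univ i), update_self,
      Finset.prod_congr rfl fun j hj => by rw [update_of_ne (Finset.ne_of_mem_erase hj), hI],
      Finset.prod_const, Finset.card_erase_of_mem (Finset.mem_univ i), Finset.card_univ,
      ENNReal.ofReal_mul dist_nonneg, ENNReal.ofReal_pow hε]
    gcongr
  calc volume (univ.pi I \ univ.pi fun i => Ioc (c₂ i - ε) (c₂ i))
      ≤ ∑ i, volume (slab i) := (measure_mono hcover).trans (measure_iUnion_fintype_le _ _)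
    _ ≤ ∑ _i : ι, ENNReal.ofReal (dist c₁ c₂ * ε ^ (Fintype.card ι - 1)) :=
        Finset.sum_le_sum fun i _ => hslab i
    _ = _ := by rw [Finset.sum_const, Finset.card_univ, nsmul_eq_mul]

end Boxes

section GridCubes

variable {n d : ℕ} (h : n ≤ d)

def gridCorners (n d : ℕ) (h : n ≤ d) (m : ℤ) (w : Euc d) : Set (Euc n) :=
  {a | w ∈ Dgrid n d h a m}

lemma gridCorners_eq_preimage_pi (m : ℤ) (w : Euc d) :
    gridCorners n d h m w =
      WithLp.ofLp ⁻¹' univ.pi fun i => Ioc (projn n d h w i - 2 ^ (-m)) (projn n d h w i) := by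
  ext a
  simp only [gridCorners, Dgrid, cubeSet, mem_ofPred_eq, mem_preimage, mem_univ_pi, mem_Ioc]
  exact forall_congr' fun i =>
    ⟨fun ⟨h₁, h₂⟩ => ⟨by linarith, h₁⟩, fun ⟨h₁, h₂⟩ => ⟨h₂, by linarith⟩⟩

lemma measurableSet_setOf_mem_Dgrid (m : ℤ) :
    MeasurableSet {p : Euc n × Euc d | p.2 ∈ Dgrid n d h p.1 m} := by
  simp only [Dgrid, cubeSet, mem_ofPred_eq, ofPred_forall]
  measurability

lemma measurableSet_gridCorners (m : ℤ) (w : Euc d) : MeasurableSet (gridCorners n d h m w) :=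
  (measurableSet_setOf_mem_Dgrid h m).preimage measurable_prodMk_right

lemma volume_gridCorners (m : ℤ) (w : Euc d) :
    volume (gridCorners n d h m w) = ENNReal.ofReal (2 ^ (-(m * n))) := by
  rw [gridCorners_eq_preimage_pi, (PiLp.volume_preserving_ofLp (Fin n)).measure_preimage
    (MeasurableSet.univ_pi fun _ => measurableSet_Ioc).nullMeasurableSet,
    volume_pi_Ioc_sub _ (by positivity), Fintype.card_fin, ← zpow_natCast, ← zpow_mul, neg_mul]

lemma volume_gridCorners_diff_le (m : ℤ) (w₁ w₂ : Euc d) :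
    volume (gridCorners n d h m w₁ \ gridCorners n d h m w₂) ≤
      ENNReal.ofReal (n * dist w₁ w₂ * 2 ^ (m * (1 - (n : ℤ)))) := by
  have hproj : dist (fun i => projn n d h w₁ i) (fun i => projn n d h w₂ i) ≤ dist w₁ w₂ :=
    (dist_pi_le_iff dist_nonneg).2 fun i => by simpa [projn] using PiLp.dist_apply_le w₁ w₂ _
  rw [gridCorners_eq_preimage_pi, gridCorners_eq_preimage_pi, ← preimage_sdiff,
    (PiLp.volume_preserving_ofLp (Fin n)).measure_preimage
      ((MeasurableSet.univ_pi fun _ => measurableSet_Ioc).diff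
        (MeasurableSet.univ_pi fun _ => measurableSet_Ioc)).nullMeasurableSet]
  refine (volume_pi_Ioc_sub_diff_le _ _ (by positivity)).trans ?_
  rw [Fintype.card_fin, ← ENNReal.ofReal_natCast, ← ENNReal.ofReal_mul (by positivity), mul_assoc]
  rcases Nat.eq_zero_or_pos n with rfl | hn
  · simp
  gcongr
  rw [← zpow_natCast, ← zpow_mul, Nat.cast_sub hn, Nat.cast_one,
    show -m * ((n : ℤ) - 1) = m * (1 - n) by ring]

lemma sigmaFinite_of_measure_Dgrid_lt_top {ν : Measure (Euc d)}
    (hν : ∀ a, ν (Dgrid n d h a 0) < ∞) : SigmaFinite ν := by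
  refine Measure.sigmaFinite_of_countable (S := range fun k : Fin n → ℤ =>
    Dgrid n d h (WithLp.toLp 2 fun i => (k i : ℝ)) 0) (countable_range _)
    (forall_mem_range.2 fun _ => hν _) (eq_univ_of_forall fun w => ?_)
  refine mem_sUnion_of_mem ?_ (mem_range_self fun i => ⌊projn n d h w i⌋)
  simp only [Dgrid, cubeSet, mem_ofPred_eq, neg_zero, zpow_zero]
  exact fun i => ⟨Int.floor_le _, Int.lt_floor_add_one _⟩

lemma measurable_measure_Dgrid (ν : Measure (Euc d)) [SFinite ν] (m : ℤ) :
    Measurable fun a => ν (Dgrid n d h a m) :=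
  measurable_measure_prodMk_left (measurableSet_setOf_mem_Dgrid h m)

end GridCubes

lemma norm_setIntegral_sub_setIntegral_le {α E : Type*} [MeasurableSpace α]
    [NormedAddCommGroup E] [NormedSpace ℝ E] {μ : Measure α} {f : α → E} {s t : Set α} {C : ℝ}
    (hs : MeasurableSet s) (ht : MeasurableSet t) (hfs : IntegrableOn f s μ)
    (hft : IntegrableOn f t μ) (hμs : μ s < ∞) (hμt : μ t < ∞) (hC : ∀ x, ‖f x‖ ≤ C) :
    ‖∫ x in s, f x ∂μ - ∫ x in t, f x ∂μ‖ ≤ C * (μ.real (s \ t) + μ.real (t \ s)) := by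
  have hdiff : ∀ {u v : Set α}, μ u < ∞ → ‖∫ x in u \ v, f x ∂μ‖ ≤ C * μ.real (u \ v) :=
    fun hu => norm_setIntegral_le_of_norm_le_const ((measure_mono sdiff_subset).trans_lt hu)
      fun x _ => hC x
  rw [← integral_inter_add_sdiff ht hfs, ← integral_inter_add_sdiff hs hft, inter_comm t s,
    add_sub_add_left_eq_sub, mul_add]
  exact (norm_sub_le _ _).trans (add_le_add (hdiff hμs) (hdiff hμt))

lemma ENNReal.inv_toReal_le_inv_of_ofReal_le {c : ℝ} {x : ℝ≥0∞} (hc : 0 < c)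
    (h : ENNReal.ofReal c ≤ x) : x.toReal⁻¹ ≤ c⁻¹ := by
  rcases eq_or_ne x ∞ with rfl | hx
  · simpa using hc.le
  · exact inv_anti₀ hc ((ENNReal.ofReal_le_iff_le_toReal hx).1 h)

section LambdaM

variable {n d : ℕ} (h : n ≤ d) {ν : Measure (Euc d)} {m : ℤ} {c₀ : ℝ}

lemma LambdaM_eq (x z y : Euc d) :
    LambdaM n d h ν m x z y = 2 ^ (m * (n : ℤ)) *
      ∫ a in gridCorners n d h m x ∩ (gridCorners n d h m z \ gridCorners n d h m y),
        (ν (Dgrid n d h a m)).toReal⁻¹ :=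
  rfl

lemma LambdaM_nonneg (x z y : Euc d) : 0 ≤ LambdaM n d h ν m x z y :=
  mul_nonneg (by positivity) (integral_nonneg fun _ => inv_nonneg.2 ENNReal.toReal_nonneg)

variable (hc₀ : 0 < c₀)
  (hν : ∀ a, ENNReal.ofReal (c₀ * 2 ^ (-(m * (n : ℤ)))) ≤ ν (Dgrid n d h a m))
include hc₀ hν

lemma abs_inv_toReal_measure_Dgrid_le (a : Euc n) :
    |(ν (Dgrid n d h a m)).toReal⁻¹| ≤ c₀⁻¹ * 2 ^ (m * (n : ℤ)) := by
  have := ENNReal.inv_toReal_le_inv_of_ofReal_le (by positivity) (hν a)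
  rwa [mul_inv, zpow_neg, inv_inv, ← abs_of_nonneg (inv_nonneg.2 ENNReal.toReal_nonneg)] at this

lemma LambdaM_le (x z y : Euc d) : LambdaM n d h ν m x z y ≤ c₀⁻¹ * 2 ^ (m * (n : ℤ)) := by
  rw [LambdaM_eq]
  set S := gridCorners n d h m x ∩ (gridCorners n d h m z \ gridCorners n d h m y)
  have hvol : volume S ≤ ENNReal.ofReal (2 ^ (-(m * (n : ℤ)))) :=
    (measure_mono inter_subset_left).trans (volume_gridCorners h m x).le
  have hint : ∫ a in S, (ν (Dgrid n d h a m)).toReal⁻¹ ≤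
      c₀⁻¹ * 2 ^ (m * (n : ℤ)) * 2 ^ (-(m * (n : ℤ))) :=
    (Real.le_norm_self _).trans <| (norm_setIntegral_le_of_norm_le_const
      (hvol.trans_lt ENNReal.ofReal_lt_top)
      fun a _ => (Real.norm_eq_abs _).trans_le (abs_inv_toReal_measure_Dgrid_le h hc₀ hν a)).trans
      (by gcongr; exact ENNReal.toReal_le_of_le_ofReal (by positivity) hvol)
  calc 2 ^ (m * (n : ℤ)) * ∫ a in S, (ν (Dgrid n d h a m)).toReal⁻¹
      ≤ 2 ^ (m * (n : ℤ)) * (c₀⁻¹ * 2 ^ (m * (n : ℤ)) * 2 ^ (-(m * (n : ℤ)))) := by gcongr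
    _ = c₀⁻¹ * 2 ^ (m * (n : ℤ)) := by rw [zpow_neg]; field_simp

lemma integrableOn_inv_toReal_measure_Dgrid [SFinite ν] (w : Euc d) :
    IntegrableOn (fun a => (ν (Dgrid n d h a m)).toReal⁻¹) (gridCorners n d h m w) :=
  Measure.integrableOn_of_bounded ((volume_gridCorners h m w).trans_lt ENNReal.ofReal_lt_top).ne
    (measurable_measure_Dgrid h ν m).ennreal_toReal.inv.aestronglyMeasurable
    (ae_of_all _ fun a =>
      (Real.norm_eq_abs _).trans_le (abs_inv_toReal_measure_Dgrid_le h hc₀ hν a))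

lemma abs_LambdaM_sub_le [SFinite ν] (x y z₁ z₂ : Euc d) :
    |LambdaM n d h ν m x z₁ y - LambdaM n d h ν m x z₂ y| ≤
      2 * n / c₀ * 2 ^ (m * ((n : ℤ) + 1)) * dist z₁ z₂ := by
  rw [LambdaM_eq, LambdaM_eq, ← mul_sub, abs_mul, abs_of_pos (by positivity)]
  set G := gridCorners n d h m
  have hmeas : ∀ w, MeasurableSet (G x ∩ (G w \ G y)) := fun w =>
    (measurableSet_gridCorners h m x).inter
      ((measurableSet_gridCorners h m w).diff (measurableSet_gridCorners h m y))
  have hfin : ∀ w, volume (G x ∩ (G w \ G y)) < ∞ := fun w =>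
    (measure_mono inter_subset_left).trans_lt
      ((volume_gridCorners h m x).trans_lt ENNReal.ofReal_lt_top)
  have hvol : ∀ w₁ w₂ : Euc d, volume.real ((G x ∩ (G w₁ \ G y)) \ (G x ∩ (G w₂ \ G y))) ≤
      n * dist w₁ w₂ * 2 ^ (m * (1 - (n : ℤ))) := fun w₁ w₂ =>
    ENNReal.toReal_le_of_le_ofReal (by positivity) <|
      (measure_mono fun a => by simp only [Set.mem_sdiff, mem_inter_iff]; tauto).trans
        (volume_gridCorners_diff_le h m w₁ w₂)
  have hg := integrableOn_inv_toReal_measure_Dgrid h hc₀ hν x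
  have hint := norm_setIntegral_sub_setIntegral_le (hmeas z₁) (hmeas z₂)
    (hg.mono_set inter_subset_left) (hg.mono_set inter_subset_left) (hfin z₁) (hfin z₂)
    fun a => (Real.norm_eq_abs _).trans_le (abs_inv_toReal_measure_Dgrid_le h hc₀ hν a)
  refine (mul_le_mul_of_nonneg_left (hint.trans (mul_le_mul_of_nonneg_left
    (add_le_add (hvol z₁ z₂) (hvol z₂ z₁)) (by positivity))) (by positivity)).trans_eq ?_
  rw [dist_comm z₂, show m * ((n : ℤ) + 1) = m * n + m * n + m * (1 - n) by ring,
    zpow_add₀ two_ne_zero, zpow_add₀ two_ne_zero]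
  ring

end LambdaM

theorem Lambda_bounds_general
    (n : ℕ) (c₀ : ℝ) (hc₀ : 0 < c₀) :
    ∃ C : ℝ, 0 < C ∧
      ∀ (d : ℕ) (hnd : n < d) (ν : Measure (Euc d)),
        (∀ (a : Euc n) (m : ℤ),
          ENNReal.ofReal (c₀ * (2 : ℝ) ^ (-(m * (n : ℤ)))) ≤ ν (Dgrid n d hnd.le a m) ∧
            ν (Dgrid n d hnd.le a m) < ⊤) →
        ∀ (m : ℤ) (x y z z₁ z₂ : Euc d),
          (0 ≤ LambdaM n d hnd.le ν m x z y ∧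
            LambdaM n d hnd.le ν m x z y ≤ C * (2 : ℝ) ^ (m * (n : ℤ))) ∧
          |LambdaM n d hnd.le ν m x z₁ y - LambdaM n d hnd.le ν m x z₂ y|
            ≤ C * (2 : ℝ) ^ (m * ((n : ℤ) + 1)) * dist z₁ z₂ := by
  refine ⟨(2 * n + 1) / c₀, by positivity, fun d hnd ν hν m x y z z₁ z₂ => ?_⟩
  have : SigmaFinite ν := sigmaFinite_of_measure_Dgrid_lt_top hnd.le fun a => (hν a 0).2
  have hlower := fun a => (hν a m).1
  refine ⟨⟨LambdaM_nonneg hnd.le x z y, (LambdaM_le hnd.le hc₀ hlower x z y).trans ?_⟩,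
    (abs_LambdaM_sub_le hnd.le hc₀ hlower x y z₁ z₂).trans ?_⟩
  · rw [inv_eq_one_div]
    gcongr
    linarith
  · gcongr
    linarith

/-- (Claim 4.1.) If `ν(D_m^a) ≥ c₀ 2^{-mn}` for all `a, m`, then
`0 ≤ Λ_m^ν(x,z;y) ≤ C 2^{mn}` and `Λ_m^ν` is `C 2^{m(n+1)}`-Lipschitz in `z`, with `C`
depending only on `n` and `c₀`. -/
theorem Lambda_bounds
    (n : ℕ) (hn : 0 < n) (c₀ : ℝ) (hc₀ : 0 < c₀) :
    ∃ C : ℝ, 0 < C ∧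
      ∀ (d : ℕ) (hnd : n < d) (ν : Measure (Euc d)),
        (∀ (a : Euc n) (m : ℤ),
          ENNReal.ofReal (c₀ * (2 : ℝ) ^ (-(m * (n : ℤ)))) ≤ ν (Dgrid n d hnd.le a m) ∧
            ν (Dgrid n d hnd.le a m) < ⊤) →
        ∀ (m : ℤ) (x y z z₁ z₂ : Euc d),
          (0 ≤ LambdaM n d hnd.le ν m x z y ∧
            LambdaM n d hnd.le ν m x z y ≤ C * (2 : ℝ) ^ (m * (n : ℤ))) ∧
          |LambdaM n d hnd.le ν m x z₁ y - LambdaM n d hnd.le ν m x z₂ y|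
            ≤ C * (2 : ℝ) ^ (m * ((n : ℤ) + 1)) * dist z₁ z₂ :=
  Lambda_bounds_general n c₀ hc₀
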